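/- For fixed t > 0 and α ∈ (0,1), lim_{ε→0⁺} ∫_ℝ (T_t^α ι_ε)(u) ι_ε(u) du = (4πt)^{−1/2} (1 + (1/(2t)) ∫₀^{+∞} z e^{−z²/(4t) − 2αz} dz), where, writing g_even(x) = (g(x)+g(−x))/2 and g_odd(x) = (g(x)−g(−x))/2, the semigroup is given for x > 0 by (T_t^α g)(x) = (4πt)^{−1/2} { ∫_ℝ e^{−(x−y)²/(4t)} g_even(y) dy + e^{2αx} ∫_x^{+∞} e^{−2αz} ∫₀^{+∞} [((z−y+4αt)/(2t)) e^{−(z−y)²/(4t)} + ((z+y−4αt)/(2t)) e^{−(z+y)²/(4t)}] g_odd(y) dy dz } and by the corresponding reflected formula for x < 0. -/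

import Mathlib

open MeasureTheory Real Filter

/-- The even part of a function. -/
noncomputable def evenPart (g : ℝ → ℝ) (x : ℝ) : ℝ := (g x + g (-x)) / 2

/-- The odd part of a function. -/
noncomputable def oddPart (g : ℝ → ℝ) (x : ℝ) : ℝ := (g x - g (-x)) / 2

/-- The semigroup `T_t^α` of the heat equation with a Robin-type (slow bond, `β = 1`)
condition at the origin, given by its explicit kernel formula. -/
noncomputable def Talpha (t α : ℝ) (g : ℝ → ℝ) (x : ℝ) : ℝ :=
  if 0 < x then
    (Real.sqrt (4 * Real.pi * t))⁻¹ *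
      ((∫ y : ℝ, Real.exp (-(x - y) ^ 2 / (4 * t)) * evenPart g y)
        + Real.exp (2 * α * x) * ∫ z in Set.Ioi x, Real.exp (-2 * α * z) *
            ∫ y in Set.Ioi (0:ℝ),
              (((z - y + 4 * α * t) / (2 * t)) * Real.exp (-(z - y) ^ 2 / (4 * t))
                + ((z + y - 4 * α * t) / (2 * t)) * Real.exp (-(z + y) ^ 2 / (4 * t)))
                * oddPart g y)
  else
    (Real.sqrt (4 * Real.pi * t))⁻¹ *
      ((∫ y : ℝ, Real.exp (-(x - y) ^ 2 / (4 * t)) * evenPart g y)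
        - Real.exp (-2 * α * x) * ∫ z in Set.Ioi (-x), Real.exp (-2 * α * z) *
            ∫ y in Set.Ioi (0:ℝ),
              (((z - y + 4 * α * t) / (2 * t)) * Real.exp (-(z - y) ^ 2 / (4 * t))
                + ((z + y - 4 * α * t) / (2 * t)) * Real.exp (-(z + y) ^ 2 / (4 * t)))
                * oddPart g y)

/-- The approximation of the identity `ι_ε = ε⁻¹ 1_{[0,ε]}`. -/
noncomputable def iotaEps (ε : ℝ) (y : ℝ) : ℝ :=
  ε⁻¹ * (Set.Icc (0:ℝ) ε).indicator (fun _ => (1:ℝ)) y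

/-!
Pairing a function with `ι_ε` averages it over `(0, ε]`, pairing it with the even part of `ι_ε`
averages its even part, and on `(0, ∞)` the odd part of `ι_ε` is `ι_ε / 2`. So it suffices that
`T_t^α ι_ε u` converges uniformly for `0 < u ≤ ε`, i.e. along pairs `(ε, u) → 0` in the wedge
`0 < u ≤ ε`. There the Gaussian term is the average of a continuous function equal to `1` at the
origin, `e^{2αu} → 1`, and the inner `y`-integral is half the average of the kernel over `(0, ε]`,
hence tends to half the kernel at `y = 0`, which is `z e^{-z²/(4t)} / (2t)`. For `ε ≤ 1` the
kernel is `O(1 + z)` uniformly in `y ∈ [0, ε]`, so dominated convergence against `e^{-2αz}`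
passes the limit through the `z`-integral.
-/

open Set Filter Topology

section Average

variable {ι α : Type*} [MeasurableSpace α] {μ : Measure α}

theorem dist_setAverage_le {s : Set α} {f : α → ℝ} {c δ : ℝ} (hs₀ : μ s ≠ 0)
    (hs : μ s ≠ ⊤) (hf : AEStronglyMeasurable f (μ.restrict s))
    (hfc : ∀ᵐ x ∂μ.restrict s, dist (f x) c ≤ δ) :
    dist (⨍ x in s, f x ∂μ) c ≤ δ := by
  have : IsFiniteMeasure (μ.restrict s) := isFiniteMeasure_restrict.2 hs
  have hfi : Integrable f (μ.restrict s) := by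
    refine Integrable.mono' (integrable_const (|c| + δ)) hf (hfc.mono fun x hx => ?_)
    have := abs_sub_abs_le_abs_sub (f x) c
    rw [Real.dist_eq] at hx
    rw [Real.norm_eq_abs]
    linarith
  have hpos : 0 < μ.real s := ENNReal.toReal_pos hs₀ hs
  rw [dist_eq_norm, ← setAverage_const hs₀ hs c, setAverage_eq, setAverage_eq,
    ← smul_sub, ← integral_sub hfi (integrable_const c), norm_smul, norm_inv,
    Real.norm_of_nonneg hpos.le, inv_mul_le_iff₀ hpos, mul_comm]
  exact norm_setIntegral_le_of_norm_le_const_ae (lt_top_iff_ne_top.2 hs)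
    (hfc.mono fun x hx => by rwa [← dist_eq_norm])

theorem tendsto_setAverage_of_forall_dist_le {l : Filter ι} {s : ι → Set α}
    {f : ι → α → ℝ} {c : ℝ} (hs₀ : ∀ᶠ i in l, μ (s i) ≠ 0) (hs : ∀ᶠ i in l, μ (s i) ≠ ⊤)
    (hf : ∀ᶠ i in l, AEStronglyMeasurable (f i) (μ.restrict (s i)))
    (hfc : ∀ δ > 0, ∀ᶠ i in l, ∀ᵐ x ∂μ.restrict (s i), dist (f i x) c ≤ δ) :
    Tendsto (fun i => ⨍ x in s i, f i x ∂μ) l (𝓝 c) := by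
  refine Metric.tendsto_nhds.2 fun δ hδ => ?_
  filter_upwards [hs₀, hs, hf, hfc (δ / 2) (half_pos hδ)] with i h₀ h₁ h₂ h₃
  exact (dist_setAverage_le h₀ h₁ h₂ h₃).trans_lt (half_lt_self hδ)

end Average

theorem integral_mul_evenPart {h g : ℝ → ℝ} (hhg : Integrable fun y => h y * g y)
    (hhg' : Integrable fun y => h (-y) * g y) :
    ∫ y, h y * evenPart g y = ∫ y, evenPart h y * g y := by
  have hhg'' : Integrable fun y => h y * g (-y) := by simpa using hhg'.comp_neg
  have hswap : ∫ y, h y * g (-y) = ∫ y, h (-y) * g y := by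
    simpa using integral_neg_eq_self (fun y => h (-y) * g y) volume
  calc ∫ y, h y * evenPart g y = ∫ y, (h y * g y + h y * g (-y)) / 2 := by
        simp only [evenPart, mul_add, add_div, mul_div_assoc]
    _ = ((∫ y, h y * g y) + ∫ y, h (-y) * g y) / 2 := by
        rw [integral_div, integral_add hhg hhg'', hswap]
    _ = ∫ y, evenPart h y * g y := by
        rw [← integral_add hhg hhg', ← integral_div]
        simp only [evenPart, add_mul, add_div, div_mul_eq_mul_div]

section iotaEps

variable {ε : ℝ}

theorem measurable_iotaEps : Measurable (iotaEps ε) :=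
  (measurable_const.indicator measurableSet_Icc).const_mul _

theorem measurable_oddPart_iotaEps : Measurable (oddPart (iotaEps ε)) :=
  (measurable_iotaEps.sub (measurable_iotaEps.comp measurable_neg)).div_const 2

theorem mul_iotaEps (g : ℝ → ℝ) (y : ℝ) :
    g y * iotaEps ε y = ε⁻¹ * (Icc 0 ε).indicator g y := by
  by_cases hy : y ∈ Icc 0 ε <;> simp [iotaEps, hy, mul_comm]

theorem integrable_mul_iotaEps {g : ℝ → ℝ} (hg : Continuous g) :
    Integrable fun y => g y * iotaEps ε y := by
  simp_rw [mul_iotaEps g]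
  exact (hg.integrableOn_Icc.integrable_indicator measurableSet_Icc).const_mul _

theorem setIntegral_mul_iotaEps (s : Set ℝ) (g : ℝ → ℝ) :
    ∫ y in s, g y * iotaEps ε y = ε⁻¹ * ∫ y in s ∩ Icc 0 ε, g y := by
  simp_rw [mul_iotaEps g]
  rw [integral_const_mul, setIntegral_indicator measurableSet_Icc]

theorem setAverage_Ioc_zero_eq_inv_mul (hε : 0 < ε) (g : ℝ → ℝ) :
    ⨍ y in Ioc 0 ε, g y = ε⁻¹ * ∫ y in Ioc 0 ε, g y := by
  rw [setAverage_eq, Real.volume_real_Ioc_of_le hε.le, sub_zero, smul_eq_mul]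

theorem integral_mul_iotaEps (hε : 0 < ε) (g : ℝ → ℝ) :
    ∫ y, g y * iotaEps ε y = ⨍ y in Ioc 0 ε, g y := by
  rw [← setIntegral_univ, setIntegral_mul_iotaEps, univ_inter, integral_Icc_eq_integral_Ioc,
    setAverage_Ioc_zero_eq_inv_mul hε]

theorem setIntegral_Ioi_mul_oddPart_iotaEps (hε : 0 < ε) (g : ℝ → ℝ) :
    ∫ y in Ioi 0, g y * oddPart (iotaEps ε) y = (⨍ y in Ioc 0 ε, g y) / 2 := by
  have hodd : ∀ y ∈ Ioi (0 : ℝ), g y * oddPart (iotaEps ε) y = g y * iotaEps ε y / 2 := by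
    intro y hy
    have hneg : -y ∉ Icc 0 ε := fun h => (neg_lt_zero.2 (mem_Ioi.1 hy)).not_ge h.1
    simp [oddPart, iotaEps, indicator_of_notMem hneg, mul_div_assoc]
  have hIoc : Ioi 0 ∩ Icc 0 ε = Ioc 0 ε := by
    ext y
    simp only [mem_inter_iff, mem_Ioi, mem_Icc, mem_Ioc]
    exact ⟨fun h => ⟨h.1, h.2.2⟩, fun h => ⟨h.1, h.1.le, h.2⟩⟩
  rw [setIntegral_congr_fun measurableSet_Ioi hodd, integral_div, setIntegral_mul_iotaEps,
    hIoc, setAverage_Ioc_zero_eq_inv_mul hε]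

end iotaEps

theorem measurable_integral_mul {α β : Type*} [MeasurableSpace α] [MeasurableSpace β]
    {K : α → β → ℝ} (hK : Measurable (Function.uncurry K)) {g : β → ℝ}
    (hg : Measurable g) (μ : Measure β) [SFinite μ] :
    Measurable fun z => ∫ y, K z y * g y ∂μ :=
  (hK.mul (hg.comp measurable_snd)).stronglyMeasurable.integral_prod_right'.measurable

theorem measurable_setIntegral_Ioi {h : ℝ → ℝ} (hh : Measurable h) :
    Measurable fun u => ∫ z in Ioi u, h z := by
  simp_rw [← integral_indicator measurableSet_Ioi]
  exact ((hh.comp measurable_snd).indicator (measurableSet_lt measurable_fst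
    measurable_snd)).stronglyMeasurable.integral_prod_right'.measurable

/-- The bracket multiplying `oddPart g y` in `Talpha`. -/
noncomputable def robinKernel (t α z y : ℝ) : ℝ :=
  ((z - y + 4 * α * t) / (2 * t)) * Real.exp (-(z - y) ^ 2 / (4 * t))
    + ((z + y - 4 * α * t) / (2 * t)) * Real.exp (-(z + y) ^ 2 / (4 * t))

theorem continuous_robinKernel (t α : ℝ) : Continuous (Function.uncurry (robinKernel t α)) := by
  unfold robinKernel Function.uncurry
  fun_prop

theorem Talpha_of_pos {t α x : ℝ} (g : ℝ → ℝ) (hx : 0 < x) :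
    Talpha t α g x = (Real.sqrt (4 * Real.pi * t))⁻¹ *
      ((∫ y : ℝ, Real.exp (-(x - y) ^ 2 / (4 * t)) * evenPart g y)
        + Real.exp (2 * α * x) * ∫ z in Ioi x, Real.exp (-2 * α * z) *
            ∫ y in Ioi 0, robinKernel t α z y * oddPart g y) :=
  if_pos hx

theorem measurable_Talpha (t α : ℝ) {g : ℝ → ℝ} (hg : Measurable g) :
    Measurable (Talpha t α g) := by
  have hgauss := measurable_integral_mul (K := fun x y => Real.exp (-(x - y) ^ 2 / (4 * t)))
    (by fun_prop) (g := evenPart g) (by unfold evenPart; fun_prop) volume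
  have hodd : Measurable fun u => ∫ z in Ioi u, Real.exp (-2 * α * z) *
      ∫ y in Ioi 0, robinKernel t α z y * oddPart g y :=
    measurable_setIntegral_Ioi ((by fun_prop : Measurable fun z => Real.exp (-2 * α * z)).mul
      (measurable_integral_mul (continuous_robinKernel t α).measurable
        (by unfold oddPart; fun_prop) _))
  unfold Talpha
  refine Measurable.ite measurableSet_Ioi ?_ ?_
  · exact measurable_const.mul (hgauss.add ((by fun_prop : Measurable _).mul hodd))
  · exact measurable_const.mul
      (hgauss.sub ((by fun_prop : Measurable _).mul (hodd.comp measurable_neg)))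

/-- Convergence of a function of `(ε, u)` along `𝓝[wedge] 0` is convergence as `ε → 0⁺`,
uniformly in `u ∈ (0, ε]`. -/
def wedge : Set (ℝ × ℝ) := {p | p.2 ∈ Ioc 0 p.1}

theorem eventually_fst_pos_wedge : ∀ᶠ p in 𝓝[wedge] (0 : ℝ × ℝ), 0 < p.1 :=
  eventually_nhdsWithin_of_forall fun _ hp => hp.1.trans_le hp.2

theorem eventually_forall_Ioc_of_eventually_wedge {P : ℝ × ℝ → Prop}
    (h : ∀ᶠ p in 𝓝[wedge] 0, P p) : ∀ᶠ ε in 𝓝[>] 0, ∀ u ∈ Ioc 0 ε, P (ε, u) := by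
  obtain ⟨r, hr, hP⟩ := Metric.mem_nhdsWithin_iff.1 h
  filter_upwards [Ioo_mem_nhdsGT hr] with ε hε u hu
  refine hP ⟨?_, hu⟩
  rw [Metric.mem_ball, Prod.dist_eq, Prod.fst_zero, Prod.snd_zero, Real.dist_0_eq_abs,
    Real.dist_0_eq_abs, abs_of_pos hε.1, abs_of_pos hu.1]
  exact max_lt hε.2 (hu.2.trans_lt hε.2)

theorem tendsto_setAverage_Ioc_wedge {H : ℝ × ℝ → ℝ} (hH : Continuous H) :
    Tendsto (fun p : ℝ × ℝ => ⨍ y in Ioc 0 p.1, H (p.2, y)) (𝓝[wedge] 0) (𝓝 (H 0)) := by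
  refine tendsto_setAverage_of_forall_dist_le ?_
    (Eventually.of_forall fun _ => measure_Ioc_lt_top.ne)
    (Eventually.of_forall fun p => (hH.comp (by fun_prop)).aestronglyMeasurable) fun δ hδ => ?_
  · filter_upwards [eventually_fst_pos_wedge] with p hp
    simpa [Real.volume_Ioc] using hp
  obtain ⟨r, hr, hH⟩ := Metric.continuousAt_iff.1 hH.continuousAt δ hδ
  have hsmall : ∀ᶠ p in 𝓝[wedge] 0, dist p 0 < r :=
    nhdsWithin_le_nhds (Metric.ball_mem_nhds 0 hr)
  filter_upwards [hsmall] with p hp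
  refine (ae_restrict_iff' measurableSet_Ioc).2 (Eventually.of_forall fun y hy => (hH ?_).le)
  rw [Prod.dist_eq, Prod.fst_zero, Prod.snd_zero, Real.dist_0_eq_abs, Real.dist_0_eq_abs] at hp ⊢
  have hp₁ : p.1 < r := (le_abs_self _).trans_lt ((le_max_left _ _).trans_lt hp)
  exact max_lt ((le_max_right _ _).trans_lt hp) ((abs_of_pos hy.1).trans_lt (hy.2.trans_lt hp₁))

theorem tendsto_setAverage_Ioc_of_tendsto_wedge {F : ℝ × ℝ → ℝ} {L : ℝ}
    (hF : Tendsto F (𝓝[wedge] 0) (𝓝 L))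
    (hmeas : ∀ ε, AEStronglyMeasurable (fun u => F (ε, u)) (volume.restrict (Ioc 0 ε))) :
    Tendsto (fun ε => ⨍ u in Ioc 0 ε, F (ε, u)) (𝓝[>] 0) (𝓝 L) := by
  refine tendsto_setAverage_of_forall_dist_le ?_
    (Eventually.of_forall fun _ => measure_Ioc_lt_top.ne) (Eventually.of_forall hmeas)
    fun δ hδ => ?_
  · filter_upwards [self_mem_nhdsWithin] with ε hε
    simpa [Real.volume_Ioc] using hε
  filter_upwards [eventually_forall_Ioc_of_eventually_wedge
    (hF.eventually (Metric.closedBall_mem_nhds L hδ))] with ε hε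
  exact (ae_restrict_iff' measurableSet_Ioc).2 (Eventually.of_forall hε)

theorem tendsto_integral_gaussian_mul_evenPart_iotaEps (t : ℝ) :
    Tendsto (fun p : ℝ × ℝ =>
        ∫ y, Real.exp (-(p.2 - y) ^ 2 / (4 * t)) * evenPart (iotaEps p.1) y)
      (𝓝[wedge] 0) (𝓝 1) := by
  set H : ℝ × ℝ → ℝ := fun q => evenPart (fun y => Real.exp (-(q.1 - y) ^ 2 / (4 * t))) q.2
  have hH : Continuous H := by unfold H evenPart; fun_prop
  have hH0 : H 0 = 1 := by simp [H, evenPart]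
  refine hH0 ▸ (tendsto_setAverage_Ioc_wedge hH).congr' ?_
  filter_upwards [eventually_fst_pos_wedge] with p hp
  rw [integral_mul_evenPart (integrable_mul_iotaEps (by fun_prop))
    (integrable_mul_iotaEps (by fun_prop)), integral_mul_iotaEps hp]

theorem integrableOn_exp_mul_mul_add {b : ℝ} (hb : b < 0) (c d : ℝ) :
    IntegrableOn (fun z => Real.exp (b * z) * (c * z + d)) (Ioi 0) := by
  have h₀ : IntegrableOn (fun z : ℝ => Real.exp (b * z)) (Ioi 0) := by
    simpa using exp_neg_integrableOn_Ioi 0 (neg_pos.2 hb)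
  have h₁ : IntegrableOn (fun z : ℝ => z * Real.exp (b * z)) (Ioi 0) := by
    simpa using integrableOn_rpow_mul_exp_neg_mul_rpow (s := 1) (p := 1) (by norm_num)
      (by norm_num) (neg_pos.2 hb)
  refine IntegrableOn.congr_fun ((h₁.const_mul c).add (h₀.const_mul d))
    (fun z _ => ?_) measurableSet_Ioi
  simp only [Pi.add_apply]
  ring

section RobinPart

variable {t α : ℝ}

theorem abs_robinKernel_le (ht : 0 < t) (hα : 0 ≤ α) {z y : ℝ} (hz : 0 ≤ z)
    (hy : y ∈ Icc (0 : ℝ) 1) : |robinKernel t α z y| ≤ (z + 1 + 4 * α * t) / t := by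
  set C := z + 1 + 4 * α * t
  have ha : 0 ≤ 4 * α * t := by positivity
  have hterm : ∀ w v : ℝ, |w| ≤ C →
      |w / (2 * t) * Real.exp (-v ^ 2 / (4 * t))| ≤ C / (2 * t) := by
    intro w v hw
    have hexp : Real.exp (-v ^ 2 / (4 * t)) ≤ 1 :=
      Real.exp_le_one_iff.2 (div_nonpos_of_nonpos_of_nonneg (neg_nonpos.2 (sq_nonneg v))
        (by positivity))
    rw [abs_mul, abs_div, abs_of_pos (by positivity : 0 < 2 * t), abs_of_pos (Real.exp_pos _)]
    calc |w| / (2 * t) * Real.exp (-v ^ 2 / (4 * t)) ≤ C / (2 * t) * 1 :=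
          mul_le_mul (div_le_div_of_nonneg_right hw (by positivity)) hexp (by positivity)
            (by positivity)
      _ = C / (2 * t) := mul_one _
  calc |robinKernel t α z y| ≤ C / (2 * t) + C / (2 * t) := by
        refine (abs_add_le _ _).trans (add_le_add (hterm _ _ ?_) (hterm _ _ ?_)) <;>
          exact abs_le.2 ⟨by linarith [hy.1, hy.2], by linarith [hy.1, hy.2]⟩
    _ = C / t := by field_simp; ring

theorem tendsto_setIntegral_robinKernel_mul_oddPart_iotaEps (z : ℝ) :
    Tendsto (fun p : ℝ × ℝ => ∫ y in Ioi 0, robinKernel t α z y * oddPart (iotaEps p.1) y)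
      (𝓝[wedge] 0) (𝓝 (robinKernel t α z 0 / 2)) := by
  have hH : Continuous fun q : ℝ × ℝ => robinKernel t α z q.2 :=
    (continuous_robinKernel t α).comp (continuous_const.prodMk continuous_snd)
  refine ((tendsto_setAverage_Ioc_wedge hH).div_const 2).congr' ?_
  filter_upwards [eventually_fst_pos_wedge] with p hp
  rw [setIntegral_Ioi_mul_oddPart_iotaEps hp]

theorem abs_setIntegral_robinKernel_mul_oddPart_iotaEps_le (ht : 0 < t) (hα : 0 ≤ α)
    {ε z : ℝ} (hε : ε ∈ Ioc (0 : ℝ) 1) (hz : 0 ≤ z) :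
    |∫ y in Ioi 0, robinKernel t α z y * oddPart (iotaEps ε) y| ≤
      (z + 1 + 4 * α * t) / (2 * t) := by
  have hK : Continuous (robinKernel t α z) :=
    (continuous_robinKernel t α).comp (continuous_const.prodMk continuous_id)
  have hbound : ∀ᵐ y ∂volume.restrict (Ioc 0 ε), dist (robinKernel t α z y) 0 ≤
      (z + 1 + 4 * α * t) / t :=
    (ae_restrict_iff' measurableSet_Ioc).2 (Eventually.of_forall fun y hy => by
      simpa [Real.dist_eq] using abs_robinKernel_le ht hα hz ⟨hy.1.le, hy.2.trans hε.2⟩)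
  have havg := dist_setAverage_le (by simp [Real.volume_Ioc, hε.1]) measure_Ioc_lt_top.ne
    hK.aestronglyMeasurable hbound
  rw [Real.dist_0_eq_abs] at havg
  rw [setIntegral_Ioi_mul_oddPart_iotaEps hε.1, abs_div, abs_two, div_le_iff₀ two_pos]
  calc _ ≤ (z + 1 + 4 * α * t) / t := havg
    _ = _ := by field_simp

theorem tendsto_setIntegral_exp_mul_robinKernel_integral (ht : 0 < t) (hα : 0 < α) :
    Tendsto (fun p : ℝ × ℝ => ∫ z in Ioi p.2, Real.exp (-2 * α * z) *
        ∫ y in Ioi 0, robinKernel t α z y * oddPart (iotaEps p.1) y) (𝓝[wedge] 0)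
      (𝓝 (∫ z in Ioi 0, Real.exp (-2 * α * z) * (robinKernel t α z 0 / 2))) := by
  set G : ℝ → ℝ → ℝ := fun ε z =>
    Real.exp (-2 * α * z) * ∫ y in Ioi 0, robinKernel t α z y * oddPart (iotaEps ε) y
  have hG : ∀ ε, Measurable (G ε) := fun ε =>
    (by fun_prop : Measurable fun z : ℝ => Real.exp (-2 * α * z)).mul
      (measurable_integral_mul (continuous_robinKernel t α).measurable
        measurable_oddPart_iotaEps _)
  have hsmall : ∀ {c : ℝ} (f : ℝ × ℝ → ℝ), Continuous f → f 0 < c →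
      ∀ᶠ p in 𝓝[wedge] 0, f p < c :=
    fun f hf hc => nhdsWithin_le_nhds ((hf.tendsto 0).eventually (gt_mem_nhds hc))
  have hindicator : ∀ᶠ p in 𝓝[wedge] (0 : ℝ × ℝ),
      ∫ z in Ioi 0, (Ioi p.2).indicator (G p.1) z = ∫ z in Ioi p.2, G p.1 z := by
    filter_upwards [self_mem_nhdsWithin] with p hp
    rw [setIntegral_indicator measurableSet_Ioi, Ioi_inter_Ioi, sup_of_le_right hp.1.le]
  refine (tendsto_integral_filter_of_dominated_convergence (μ := volume.restrict (Ioi 0))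
    (F := fun (p : ℝ × ℝ) z => (Ioi p.2).indicator (G p.1) z)
    (f := fun z => Real.exp (-2 * α * z) * (robinKernel t α z 0 / 2))
    (fun z => Real.exp (-2 * α * z) * (1 / (2 * t) * z + (1 + 4 * α * t) / (2 * t)))
    (Eventually.of_forall fun p => ((hG p.1).indicator measurableSet_Ioi).aestronglyMeasurable)
    ?_ (integrableOn_exp_mul_mul_add (by linarith) _ _) ?_).congr' hindicator
  · filter_upwards [eventually_fst_pos_wedge, hsmall Prod.fst continuous_fst zero_lt_one]
      with p hp₀ hp₁
    refine (ae_restrict_iff' measurableSet_Ioi).2 (Eventually.of_forall fun z hz => ?_)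
    refine (norm_indicator_le_norm_self _ _).trans ?_
    rw [Real.norm_eq_abs, abs_mul, abs_of_pos (Real.exp_pos _)]
    refine mul_le_mul_of_nonneg_left ?_ (Real.exp_pos _).le
    exact (abs_setIntegral_robinKernel_mul_oddPart_iotaEps_le ht hα.le ⟨hp₀, hp₁.le⟩
      (le_of_lt hz)).trans_eq (by ring)
  · refine (ae_restrict_iff' measurableSet_Ioi).2 (Eventually.of_forall fun z hz => ?_)
    refine ((tendsto_setIntegral_robinKernel_mul_oddPart_iotaEps z).const_mul _).congr' ?_
    filter_upwards [hsmall Prod.snd continuous_snd hz] with p hp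
    rw [indicator_of_mem (show z ∈ Ioi p.2 from hp)]

end RobinPart

theorem tendsto_Talpha_iotaEps_wedge {t α : ℝ} (ht : 0 < t) (hα : 0 < α) :
    Tendsto (fun p : ℝ × ℝ => Talpha t α (iotaEps p.1) p.2) (𝓝[wedge] 0)
      (𝓝 ((Real.sqrt (4 * Real.pi * t))⁻¹ *
        (1 + ∫ z in Ioi 0, Real.exp (-2 * α * z) * (robinKernel t α z 0 / 2)))) := by
  have hexp : Tendsto (fun p : ℝ × ℝ => Real.exp (2 * α * p.2)) (𝓝[wedge] 0) (𝓝 1) := by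
    simpa using ((by fun_prop : Continuous fun p : ℝ × ℝ => Real.exp (2 * α * p.2)).tendsto
      0).mono_left nhdsWithin_le_nhds
  have hlim := ((tendsto_integral_gaussian_mul_evenPart_iotaEps t).add
    (hexp.mul (tendsto_setIntegral_exp_mul_robinKernel_integral ht hα))).const_mul
      (Real.sqrt (4 * Real.pi * t))⁻¹
  rw [one_mul] at hlim
  refine hlim.congr' ?_
  filter_upwards [self_mem_nhdsWithin] with p hp
  rw [Talpha_of_pos _ hp.1]

theorem setIntegral_exp_mul_robinKernel_zero (t α : ℝ) :
    ∫ z in Ioi 0, Real.exp (-2 * α * z) * (robinKernel t α z 0 / 2) =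
      1 / (2 * t) * ∫ z in Ioi (0 : ℝ), z * Real.exp (-z ^ 2 / (4 * t) - 2 * α * z) := by
  rw [← integral_const_mul]
  congr 1
  ext z
  simp only [robinKernel, sub_zero, add_zero, sub_eq_add_neg (-z ^ 2 / (4 * t)), Real.exp_add,
    neg_mul]
  ring

/-- for the slow-bond semigroup `T_t^α` (`β = 1`),
`lim_{ε→0⁺} ∫_ℝ (T_t^α ι_ε)(u) ι_ε(u) du
 = (4πt)^{−1/2} (1 + (1/(2t)) ∫₀^∞ z e^{−z²/(4t) − 2αz} dz)`. -/
theorem Talpha_average_limit (t α : ℝ) (ht : 0 < t) (hα : α ∈ Set.Ioo (0:ℝ) 1) :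
    Filter.Tendsto (fun ε : ℝ => ∫ u : ℝ, Talpha t α (iotaEps ε) u * iotaEps ε u)
      (nhdsWithin 0 (Set.Ioi 0))
      (nhds ((Real.sqrt (4 * Real.pi * t))⁻¹ *
        (1 + (1 / (2 * t)) *
          ∫ z in Set.Ioi (0:ℝ), z * Real.exp (-z ^ 2 / (4 * t) - 2 * α * z)))) := by
  have hlim := tendsto_setAverage_Ioc_of_tendsto_wedge (tendsto_Talpha_iotaEps_wedge ht hα.1)
    fun ε => (measurable_Talpha t α measurable_iotaEps).aestronglyMeasurable
  rw [setIntegral_exp_mul_robinKernel_zero] at hlim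
  refine hlim.congr' ?_
  filter_upwards [self_mem_nhdsWithin] with ε hε
  rw [integral_mul_iotaEps hε]
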